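/- arXiv:1611.03845 — 11 statements merged into one kernel-verified Lean document; each statement's English description precedes it below -/
import Mathlib

section
/- If S is the numerical semigroup generated by two coprime integers p and q with 1 < p < q, then the largest integer not belonging to S is (p-1)(q-1)-1. -/
theorem Nat.sub_one_mul_sub_one_sub_one (m n : ℕ) :
    (m - 1) * (n - 1) - 1 = m * n - m - n := by
  rcases m with _ | m <;> rcases n with _ | n
  all_goals simp only [Nat.add_sub_cancel, zero_mul, mul_zero, Nat.zero_sub, Nat.sub_zero]
  rw [show (m + 1) * (n + 1) = m * n + m + n + 1 by ring]
  omega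

theorem setOf_not_exists_eq_mul_add_mul (p q : ℕ) :
    {n : ℕ | ¬ ∃ a b : ℕ, n = a * p + b * q} = {n | n ∉ AddSubmonoid.closure {p, q}} := by
  ext n
  simp [AddSubmonoid.mem_closure_pair, eq_comm]

theorem largest_gap_of_two_generated_semigroup
    (p q : ℕ) (hp : 1 < p) (hpq : p < q) (hcop : Nat.Coprime p q) :
    IsGreatest {n : ℕ | ¬ ∃ a b : ℕ, n = a * p + b * q} ((p - 1) * (q - 1) - 1) := by
  rw [Nat.sub_one_mul_sub_one_sub_one, setOf_not_exists_eq_mul_add_mul]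
  exact frobeniusNumber_pair hcop hp (hp.trans hpq)
end

section
/- If S is the numerical semigroup generated by two coprime integers p and q with 1 < p < q, then the number of gaps (nonnegative integers not in S) equals (p-1)(q-1)/2. -/
/-!
Every integer `n` can be written as `n = a * p + b * q` with `0 ≤ a < q`, and `n` lies in the
semigroup exactly when `b ≥ 0`. Replacing `(a, b)` by `(q - 1 - a, -1 - b)` shows that, for
`n + m = p * q - p - q`, exactly one of `n` and `m` lies in the semigroup. Since every
`n ≥ (p - 1) * (q - 1)` does, the reflection `n ↦ (p - 1) * (q - 1) - 1 - n` of
`[0, (p - 1) * (q - 1))` exchanges gaps and elements, so the gaps fill exactly half of this interval.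
-/

open Finset

theorem Int.exists_mul_add_mul_eq_of_isCoprime {p q : ℤ} (hcop : IsCoprime p q) (hq : 0 < q)
    (n : ℤ) : ∃ a b : ℤ, 0 ≤ a ∧ a < q ∧ a * p + b * q = n := by
  obtain ⟨u, v, huv⟩ := hcop
  refine ⟨n * u % q, n * v + n * u / q * p, Int.emod_nonneg _ hq.ne', Int.emod_lt_of_pos _ hq, ?_⟩
  linear_combination p * Int.emod_add_mul_ediv (n * u) q + n * huv

def Representable (p q n : ℕ) : Prop := ∃ a b : ℕ, n = a * p + b * q

section Representable

variable {p q n m : ℕ}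

theorem representable_of_int {a b : ℤ} (ha : 0 ≤ a) (hb : 0 ≤ b) (h : (n : ℤ) = a * p + b * q) :
    Representable p q n := by
  lift a to ℕ using ha
  lift b to ℕ using hb
  exact ⟨a, b, by exact_mod_cast h⟩

theorem representable_of_mul_pred_le (hcop : Nat.Coprime p q) (h : (p - 1) * (q - 1) ≤ n) :
    Representable p q n := by
  obtain ⟨a, b, hab⟩ := Nat.exists_add_mul_eq_of_gcd_dvd_of_mul_pred_le p q n
    (by simp [hcop.gcd_eq_one]) (by simpa only [Nat.pred_eq_sub_one] using h)
  exact ⟨a, b, hab.symm⟩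

theorem not_representable_of_add_add_eq_mul (hcop : Nat.Coprime p q) (h : n + m + p + q = p * q)
    (hn : Representable p q n) : ¬ Representable p q m := by
  obtain ⟨a, b, rfl⟩ := hn
  rintro ⟨c, d, rfl⟩
  exact hcop.mul_add_mul_ne_mul (a + c).succ_ne_zero (b + d).succ_ne_zero (by linarith)

theorem representable_of_add_add_eq_mul (hcop : Nat.Coprime p q) (h : n + m + p + q = p * q)
    (hn : ¬ Representable p q n) : Representable p q m := by
  have hq : 0 < q := by
    refine Nat.pos_of_ne_zero fun hq => ?_
    subst hq
    simp_all
  obtain ⟨a, b, ha, haq, hab⟩ := Int.exists_mul_add_mul_eq_of_isCoprime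
    (Nat.isCoprime_iff_coprime.mpr hcop) (by exact_mod_cast hq) n
  have hb : b < 0 := by
    by_contra! hb
    exact hn (representable_of_int ha hb hab.symm)
  have h' : (n + m + p + q : ℤ) = p * q := by exact_mod_cast h
  exact representable_of_int (a := q - 1 - a) (b := -1 - b) (by omega) (by omega)
    (by linear_combination h' + hab)

theorem representable_iff_not_representable (hcop : Nat.Coprime p q)
    (h : n + m + p + q = p * q) : Representable p q n ↔ ¬ Representable p q m :=
  ⟨not_representable_of_add_add_eq_mul hcop h, fun hm => by_contra fun hn =>
    hm (representable_of_add_add_eq_mul hcop h hn)⟩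

end Representable

theorem Finset.card_filter_range_of_reflect {P : ℕ → Prop} [DecidablePred P] {c : ℕ}
    (h : ∀ n < c, P (c - 1 - n) ↔ ¬ P n) : #{n ∈ range c | P n} = c / 2 := by
  have hreflect : #{n ∈ range c | P n} = #{n ∈ range c | ¬ P n} := by
    refine card_nbij' (c - 1 - ·) (c - 1 - ·) ?_ ?_ ?_ ?_ <;>
      simp only [coe_filter, Set.MapsTo, Set.LeftInvOn, Set.mem_ofPred_eq, mem_range]
    · exact fun n ⟨hn, hP⟩ => ⟨by omega, by rwa [h n hn, not_not]⟩
    · exact fun n ⟨hn, hP⟩ => ⟨by omega, by rwa [h n hn]⟩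
    all_goals exact fun n ⟨hn, _⟩ => by omega
  have htotal : #{n ∈ range c | P n} + #{n ∈ range c | ¬ P n} = c := by
    rw [card_filter_add_card_filter_not, card_range]
  omega

theorem add_sub_add_add_eq_mul {p q n : ℕ} (hn : n < (p - 1) * (q - 1)) :
    n + ((p - 1) * (q - 1) - 1 - n) + p + q = p * q := by
  obtain ⟨p, rfl⟩ : ∃ p', p = p' + 1 := ⟨p - 1, by grind⟩
  obtain ⟨q, rfl⟩ : ∃ q', q = q' + 1 := ⟨q - 1, by grind⟩
  simp only [Nat.add_sub_cancel] at hn ⊢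
  grind

theorem card_gaps_of_two_generated_semigroup_general
    (p q : ℕ) (hcop : Nat.Coprime p q) :
    Set.ncard {n : ℕ | ¬ ∃ a b : ℕ, n = a * p + b * q} = (p - 1) * (q - 1) / 2 := by
  classical
  have hgaps : {n : ℕ | ¬ ∃ a b : ℕ, n = a * p + b * q} =
      ↑{n ∈ range ((p - 1) * (q - 1)) | ¬ Representable p q n} := by
    ext n
    rw [mem_coe, mem_filter, mem_range]
    exact ⟨fun hn => ⟨not_le.mp (mt (representable_of_mul_pred_le hcop) hn), hn⟩, And.right⟩
  rw [hgaps, Set.ncard_coe_finset, card_filter_range_of_reflect]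
  intro n hn
  rw [not_not, representable_iff_not_representable hcop (add_sub_add_add_eq_mul hn)]

theorem card_gaps_of_two_generated_semigroup
    (p q : ℕ) (hp : 1 < p) (hpq : p < q) (hcop : Nat.Coprime p q) :
    Set.ncard {n : ℕ | ¬ ∃ a b : ℕ, n = a * p + b * q} = (p - 1) * (q - 1) / 2 :=
  card_gaps_of_two_generated_semigroup_general p q hcop
end

section
/- Let S be the numerical semigroup generated by coprime p, q with 1 < p < q, and let g = (p-1)(q-1)/2. Then for every integer x, exactly one of x ∈ S and 2g - 1 - x ∈ S holds. -/
lemma rep_iff (p q : ℕ) (hcop : Nat.Coprime p q) (x a b : ℤ)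
    (ha : 0 ≤ a) (haq : a < q) (hx : x = a * p + b * q) :
    (∃ a' b' : ℕ, x = (a' * p + b' * q : ℕ)) ↔ 0 ≤ b := by
  have hq : (0:ℤ) < q := lt_of_le_of_lt ha haq
  constructor
  · rintro ⟨a', b', h⟩
    push_cast at h
    have hcop' : IsCoprime (q:ℤ) (p:ℤ) :=
      (Nat.isCoprime_iff_coprime.mpr hcop.symm)
    have hdvd : (q:ℤ) ∣ ((a':ℤ) - a) := by
      have hd : (q:ℤ) ∣ ((a':ℤ) - a) * p := ⟨b - b', by linarith [hx, h]⟩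
      exact hcop'.dvd_of_dvd_mul_right hd
    obtain ⟨k, hk⟩ := hdvd
    have ha' : (0:ℤ) ≤ a' := Int.natCast_nonneg a'
    have hk0 : 0 ≤ k := by nlinarith
    have hb : b = b' + k * p := by
      have hcancel : (q:ℤ) * (b - b') = q * (k * p) := by nlinarith
      have := mul_left_cancel₀ (ne_of_gt hq) hcancel
      linarith
    have hb' : (0:ℤ) ≤ b' := Int.natCast_nonneg b'
    have hp0 : (0:ℤ) ≤ p := Int.natCast_nonneg p
    nlinarith
  · intro hb
    refine ⟨a.toNat, b.toNat, ?_⟩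
    push_cast [Int.toNat_of_nonneg ha, Int.toNat_of_nonneg hb]
    linarith

theorem semigroup_symmetry
    (p q : ℕ) (hp : 1 < p) (hpq : p < q) (hcop : Nat.Coprime p q)
    (g : ℕ) (hg : g = (p - 1) * (q - 1) / 2) (x : ℤ) :
    Xor' (∃ a b : ℕ, x = (a * p + b * q : ℕ))
         (∃ a b : ℕ, 2 * (g : ℤ) - 1 - x = (a * p + b * q : ℕ)) := by
  have hq1 : 1 < q := hp.trans hpq
  have hqZ : (0:ℤ) < q := by exact_mod_cast (by omega : 0 < q)
  -- 2*g = (p-1)*(q-1) since the product is even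
  have heven : 2 ∣ (p - 1) * (q - 1) := by
    rcases Nat.even_or_odd p with hpe | hpo
    · have hqo : Odd q := by
        rcases Nat.even_or_odd q with hqe | hqo
        · exfalso
          have h2 : 2 ∣ Nat.gcd p q := Nat.dvd_gcd hpe.two_dvd hqe.two_dvd
          have hg1 : Nat.gcd p q = 1 := hcop
          omega
        · exact hqo
      have : Even (q - 1) := Nat.Odd.sub_odd hqo odd_one
      exact Dvd.dvd.mul_left this.two_dvd _
    · have : Even (p - 1) := Nat.Odd.sub_odd hpo odd_one
      exact Dvd.dvd.mul_right this.two_dvd _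
  have h2g : 2 * g = (p - 1) * (q - 1) := by
    rw [hg]; exact Nat.mul_div_cancel' heven
  have hF : 2 * (g:ℤ) - 1 = p * q - p - q := by
    have h := h2g
    zify [hp.le, hq1.le] at h
    linear_combination h
  -- canonical representation
  obtain ⟨u, v, huv⟩ := (Nat.isCoprime_iff_coprime.mpr hcop)
  set t := x * u / q with ht
  set a := x * u % q with ha
  set b := x * v + t * p with hb
  have ha0 : 0 ≤ a := Int.emod_nonneg _ (ne_of_gt hqZ)
  have haq : a < q := Int.emod_lt_of_pos _ hqZ
  have hmod : a = x * u - q * t := by rw [ha, ht, Int.emod_def]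
  have hx : x = a * p + b * q := by
    rw [hmod, hb]; linear_combination (-x) * huv
  have h1 := rep_iff p q hcop x a b ha0 haq hx
  have hx2 : 2 * (g:ℤ) - 1 - x = (q - 1 - a) * p + (-1 - b) * q := by
    rw [hF]; linarith [hx]
  have h2 := rep_iff p q hcop (2 * (g:ℤ) - 1 - x) (q - 1 - a) (-1 - b)
    (by linarith) (by linarith) hx2
  simp only [Xor', xor_def, h1, h2]
  omega
end

section
/- For the torus knot T(p,q) with coprime 1 < p < q, the symmetrized Alexander polynomial satisfies t^g · Δ(t) = 1 + (t-1)·∑_{r ∈ G} t^r, where S is the numerical semigroup generated by p and q, G its gap set, and g = (p-1)(q-1)/2; i.e., the polynomial (t^{pq}-1)(t-1)/((t^p-1)(t^q-1)) equals 1 + (t-1)·∑_{r ∈ G} t^r. -/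
/-!
Put `P = ∑_{a<q} t^{ap}` and `Q = ∑_{b<p} t^{bq}`, so `P (t^p - 1) = Q (t^q - 1) = t^{pq} - 1`.
By coprimality the numbers `ap + bq` with `a < q`, `b < p` are pairwise distinct. Those below
`pq` are exactly the elements of `S` below `pq`; the others are `pq + r` for the gaps `r`, since
every integer above the Frobenius number `pq - p - q` lies in `S`. Hence `PQ = A + t^{pq} B`,
where `A` and `B` are the generating polynomials of `S ∩ [0, pq)` and of `G`. As
`(A + B)(t - 1) = t^{pq} - 1`, this gives `PQ (t - 1) = (t^{pq} - 1)(1 + (t - 1) B)`; multiplying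
by `(t^p - 1)(t^q - 1)` and cancelling `t^{pq} - 1` yields the formula.
-/

open Polynomial Finset

namespace Nat.Coprime

variable {p q : ℕ}

theorem eq_and_eq_of_mul_add_mul_eq (hcop : p.Coprime q) {a a' b b' : ℕ} (ha : a < q)
    (ha' : a' < q) (h : a * p + b * q = a' * p + b' * q) : a = a' ∧ b = b' := by
  have hmod : a * p ≡ a' * p [MOD q] := by
    simpa [Nat.ModEq, Nat.add_mul_mod_self_right] using congrArg (· % q) h
  have haa' : a = a' := (hmod.cancel_right_of_coprime hcop.symm).eq_of_lt_of_lt ha ha'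
  subst haa'
  exact ⟨rfl, Nat.eq_of_mul_eq_mul_right (by omega) (by omega : b * q = b' * q)⟩

end Nat.Coprime

theorem lt_and_lt_of_mul_add_mul_lt {p q a b : ℕ} (h : a * p + b * q < p * q) : a < q ∧ b < p :=
  ⟨Nat.lt_of_mul_lt_mul_right (a := p) (by rw [mul_comm q]; omega),
    Nat.lt_of_mul_lt_mul_right (a := q) (by omega)⟩

def boxSums (p q : ℕ) : Finset ℕ :=
  (range q ×ˢ range p).image fun ab => ab.1 * p + ab.2 * q

open scoped Classical in
noncomputable def semigroupBelow (p q : ℕ) : Finset ℕ :=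
  (range (p * q)).filter fun n => ∃ a b : ℕ, n = a * p + b * q

open scoped Classical in
noncomputable def semigroupGaps (p q : ℕ) : Finset ℕ :=
  (range (p * q)).filter fun n => ¬ ∃ a b : ℕ, n = a * p + b * q

section

variable {p q : ℕ}

theorem mem_boxSums {n : ℕ} : n ∈ boxSums p q ↔ ∃ a < q, ∃ b < p, a * p + b * q = n := by
  simp [boxSums, and_assoc]

theorem sum_pow_boxSums {R : Type*} [CommSemiring R] (hcop : p.Coprime q) (x : R) :
    ∑ n ∈ boxSums p q, x ^ n = (∑ a ∈ range q, (x ^ p) ^ a) * ∑ b ∈ range p, (x ^ q) ^ b := by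
  have hinj : Set.InjOn (fun ab : ℕ × ℕ => ab.1 * p + ab.2 * q) ↑(range q ×ˢ range p) := by
    rintro ⟨a, b⟩ hab ⟨a', b'⟩ hab' h
    simp only [coe_product, coe_range, Set.mem_prod, Set.mem_Iio] at hab hab'
    obtain ⟨rfl, rfl⟩ := hcop.eq_and_eq_of_mul_add_mul_eq hab.1 hab'.1 h
    rfl
  rw [boxSums, sum_image hinj, sum_mul_sum, sum_product]
  simp only [← pow_mul, ← pow_add, mul_comm]

theorem mem_semigroupGaps {n : ℕ} :
    n ∈ semigroupGaps p q ↔ n < p * q ∧ ¬ ∃ a b : ℕ, n = a * p + b * q := by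
  simp [semigroupGaps]

theorem mul_add_mem_boxSums_of_gap (hcop : p.Coprime q) (hp : 1 < p) (hq : 1 < q) {n : ℕ}
    (hn : ¬ ∃ a b : ℕ, n = a * p + b * q) : p * q + n ∈ boxSums p q := by
  have hrep : p * q + n ∈ AddSubmonoid.closure {p, q} :=
    (frobeniusNumber_iff.mp (frobeniusNumber_pair hcop hp hq)).2 _ (by
      have : 0 < p * q := by positivity
      omega)
  obtain ⟨a, b, hab⟩ := (AddSubmonoid.mem_closure_pair _ _ _).mp hrep
  simp only [smul_eq_mul] at hab
  refine mem_boxSums.mpr ⟨a, ?_, b, ?_, hab⟩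
  · by_contra! ha
    obtain ⟨c, rfl⟩ := Nat.exists_eq_add_of_le ha
    exact hn ⟨c, b, by linarith⟩
  · by_contra! hb
    obtain ⟨c, rfl⟩ := Nat.exists_eq_add_of_le hb
    exact hn ⟨a, c, by linarith⟩

theorem mem_semigroupGaps_of_mul_add_mul_eq_mul_add (hcop : p.Coprime q) {a b n : ℕ} (ha : a < q)
    (hb : b < p) (h : a * p + b * q = p * q + n) : n ∈ semigroupGaps p q := by
  have hap : a * p < q * p := Nat.mul_lt_mul_of_pos_right ha (by omega)
  have hbq : b * q < p * q := Nat.mul_lt_mul_of_pos_right hb (by omega)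
  refine mem_semigroupGaps.mpr ⟨by linarith, ?_⟩
  rintro ⟨a', b', rfl⟩
  have ha' : a' < q := (lt_and_lt_of_mul_add_mul_lt (p := p) (b := b') (by linarith)).1
  have hbb' : b = b' + p := (hcop.eq_and_eq_of_mul_add_mul_eq ha ha' (by linarith)).2
  omega

theorem filter_lt_boxSums : (boxSums p q).filter (· < p * q) = semigroupBelow p q := by
  ext n
  simp only [semigroupBelow, mem_filter, mem_boxSums, mem_range]
  constructor
  · rintro ⟨⟨a, -, b, -, rfl⟩, hn⟩
    exact ⟨hn, a, b, rfl⟩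
  · rintro ⟨hn, a, b, rfl⟩
    obtain ⟨ha, hb⟩ := lt_and_lt_of_mul_add_mul_lt hn
    exact ⟨⟨a, ha, b, hb, rfl⟩, hn⟩

theorem filter_not_lt_boxSums (hcop : p.Coprime q) (hp : 1 < p) (hq : 1 < q) :
    (boxSums p q).filter (¬ · < p * q) = (semigroupGaps p q).map (addLeftEmbedding (p * q)) := by
  ext n
  simp only [mem_filter, mem_map, addLeftEmbedding_apply]
  constructor
  · rintro ⟨hn, hle⟩
    obtain ⟨a, ha, b, hb, hab⟩ := mem_boxSums.mp hn
    exact ⟨n - p * q, mem_semigroupGaps_of_mul_add_mul_eq_mul_add hcop ha hb (by omega), by omega⟩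
  · rintro ⟨m, hm, rfl⟩
    exact ⟨mul_add_mem_boxSums_of_gap hcop hp hq (mem_semigroupGaps.mp hm).2, by omega⟩

theorem geom_sum_mul_geom_sum_eq (hcop : p.Coprime q) (hp : 1 < p) (hq : 1 < q) {R : Type*}
    [CommSemiring R] (x : R) :
    (∑ a ∈ range q, (x ^ p) ^ a) * ∑ b ∈ range p, (x ^ q) ^ b =
      ∑ n ∈ semigroupBelow p q, x ^ n + x ^ (p * q) * ∑ n ∈ semigroupGaps p q, x ^ n := by
  rw [← sum_pow_boxSums hcop, ← sum_filter_add_sum_filter_not _ (· < p * q), filter_lt_boxSums,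
    filter_not_lt_boxSums hcop hp hq, sum_map, mul_sum]
  simp only [addLeftEmbedding_apply, pow_add]

end

open scoped Classical in
theorem alexander_polynomial_torus_knot_gap_formula
    (p q : ℕ) (hp : 1 < p) (hpq : p < q) (hcop : Nat.Coprime p q)
    (G : Finset ℕ)
    (hG : G = (Finset.range (p * q)).filter (fun n => ¬ ∃ a b : ℕ, n = a * p + b * q)) :
    ((X : ℤ[X]) ^ (p * q) - 1) * (X - 1) =
      (X ^ p - 1) * (X ^ q - 1) * (1 + (X - 1) * ∑ r ∈ G, X ^ r) := by
  have hq : 1 < q := hp.trans hpq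
  replace hG : G = semigroupGaps p q := hG
  subst hG
  have hAB : (∑ n ∈ semigroupBelow p q, X ^ n + ∑ n ∈ semigroupGaps p q, X ^ n) * (X - 1 : ℤ[X]) =
      X ^ (p * q) - 1 := by
    rw [semigroupBelow, semigroupGaps, sum_filter_add_sum_filter_not, geom_sum_mul]
  set P : ℤ[X] := ∑ a ∈ range q, (X ^ p) ^ a
  set Q : ℤ[X] := ∑ b ∈ range p, (X ^ q) ^ b
  set B : ℤ[X] := ∑ n ∈ semigroupGaps p q, X ^ n
  have hP : P * (X ^ p - 1) = X ^ (p * q) - 1 := by rw [geom_sum_mul, ← pow_mul]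
  have hQ : Q * (X ^ q - 1) = X ^ (p * q) - 1 := by rw [geom_sum_mul, ← pow_mul, mul_comm]
  have hPQ : P * Q = ∑ n ∈ semigroupBelow p q, X ^ n + X ^ (p * q) * B :=
    geom_sum_mul_geom_sum_eq hcop hp hq X
  have hPQX : P * Q * (X - 1) = (X ^ (p * q) - 1) * (1 + (X - 1) * B) := by
    linear_combination (X - 1 : ℤ[X]) * hPQ + hAB
  have hu : (X ^ (p * q) - 1 : ℤ[X]) ≠ 0 := X_pow_sub_C_ne_zero (by positivity) 1
  refine mul_left_cancel₀ hu ?_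
  calc (X ^ (p * q) - 1) * ((X ^ (p * q) - 1) * (X - 1))
      = P * (X ^ p - 1) * (Q * (X ^ q - 1)) * (X - 1) := by rw [hP, hQ, mul_assoc]
    _ = (X ^ p - 1) * (X ^ q - 1) * (P * Q * (X - 1)) := by ring
    _ = (X ^ (p * q) - 1) * ((X ^ p - 1) * (X ^ q - 1) * (1 + (X - 1) * B)) := by
      rw [hPQX]; ring
end

section
/- Let S be the numerical semigroup generated by d-1 and d for an integer d > 1. Then for every j with 0 ≤ j ≤ d-2, the number of elements of S in the interval [0, jd+1) equals (j+1)(j+2)/2. -/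
/-!
Writing `n = a (d - 1) + b d` as `n = k (d - 1) + b` with `k = a + b` and `b ≤ k` shows that the
elements of the semigroup up to `j d` are exactly the numbers `k (d - 1) + b` with `b ≤ k ≤ j`.
Since `j < d - 1`, the pair `(k, b)` is recovered from `n` by division with remainder by `d - 1`,
so these elements are counted by the triangle `{(k, b) | b ≤ k ≤ j}`, which has
`1 + 2 + ⋯ + (j + 1)` points.
-/

open Finset

theorem exists_mul_add_mul_succ_iff {e n : ℕ} :
    (∃ a b : ℕ, n = a * e + b * (e + 1)) ↔ ∃ k b : ℕ, b ≤ k ∧ n = k * e + b := by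
  constructor
  · rintro ⟨a, b, rfl⟩
    exact ⟨a + b, b, by omega, by ring⟩
  · rintro ⟨k, b, hbk, rfl⟩
    obtain ⟨a, rfl⟩ := Nat.exists_eq_add_of_le' hbk
    exact ⟨a, b, by ring⟩

theorem mul_add_le_mul_succ_iff {e j k b : ℕ} (hj : j < e) (hbk : b ≤ k) :
    k * e + b ≤ j * (e + 1) ↔ k ≤ j := by
  constructor
  · intro h
    by_contra! hjk
    nlinarith
  · intro hkj
    nlinarith

theorem eq_and_eq_of_mul_add_eq {e k b k' b' : ℕ} (hb : b < e) (hb' : b' < e)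
    (h : k * e + b = k' * e + b') : k = k' ∧ b = b' := by
  have he : 0 < e := by omega
  have hkb := (Nat.div_mod_unique (a := k * e + b) (d := k) (c := b) he).2 ⟨by ring, hb⟩
  have hkb' := (Nat.div_mod_unique (a := k' * e + b') (d := k') (c := b') he).2 ⟨by ring, hb'⟩
  rw [h] at hkb
  exact ⟨hkb.1.symm.trans hkb'.1, hkb.2.symm.trans hkb'.2⟩

theorem card_sigma_range_succ (j : ℕ) :
    ((range (j + 1)).sigma fun k => range (k + 1)).card = (j + 1) * (j + 2) / 2 := by
  rw [card_sigma]
  simp only [card_range]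
  rw [← add_zero (∑ k ∈ range (j + 1), (k + 1)), ← sum_range_succ' (fun k => k), sum_range_id]
  simp [Nat.mul_comm]

open scoped Classical in
theorem semigroup_counting_case_a
    (d : ℕ) (hd : 1 < d) (j : ℕ) (hj : j ≤ d - 2) :
    ((Finset.range (j * d + 1)).filter
        (fun n => ∃ a b : ℕ, n = a * (d - 1) + b * d)).card = (j + 1) * (j + 2) / 2 := by
  obtain ⟨e, rfl⟩ : ∃ e, d = e + 1 := ⟨d - 1, by omega⟩
  have hje : j < e := by omega
  have htriangle : (range (j * (e + 1) + 1)).filter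
        (fun n => ∃ a b : ℕ, n = a * (e + 1 - 1) + b * (e + 1)) =
      ((range (j + 1)).sigma fun k => range (k + 1)).image fun p => p.1 * e + p.2 := by
    ext n
    simp only [mem_filter, mem_range, Nat.add_sub_cancel, exists_mul_add_mul_succ_iff, mem_image,
      mem_sigma, Sigma.exists, Nat.lt_succ_iff]
    constructor
    · rintro ⟨hn, k, b, hbk, rfl⟩
      exact ⟨k, b, ⟨(mul_add_le_mul_succ_iff hje hbk).1 hn, hbk⟩, rfl⟩
    · rintro ⟨k, b, ⟨hkj, hbk⟩, rfl⟩
      exact ⟨(mul_add_le_mul_succ_iff hje hbk).2 hkj, k, b, hbk, rfl⟩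
  rw [htriangle, card_image_of_injOn, card_sigma_range_succ]
  rintro ⟨k, b⟩ hp ⟨k', b'⟩ hp' h
  simp only [coe_sigma, Set.mem_sigma_iff, mem_coe, mem_range] at hp hp'
  dsimp only at hp hp' h
  obtain ⟨rfl, rfl⟩ := eq_and_eq_of_mul_add_eq (by omega) (by omega) h
  rfl
end

section
/- Let d > 1 be even and let S be the numerical semigroup generated by d/2 and 2d-1. Then for every j with 0 ≤ j ≤ d-2, the number of elements of S in [0, jd+1) equals (j+1)(j+2)/2. -/
/-!
Write `d = 2m`, so the generators are `m` and `e = 4m - 1`. As `e ≡ -1 (mod m)`, every element of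
the semigroup has a unique representation `a m + b e` with `b < m`, and it equals `(a + 4b) m - b`;
so it is at most `j d = 2jm` exactly when `a + 4b ≤ 2j`, a condition that forces `b < m` once
`j ≤ d - 2`. Counting these lattice points by `b` gives `∑_{b ≤ j/2} (2j - 4b + 1)`, which is
`(j + 1)(j + 2) / 2` for either parity of `j`.
-/

open Finset

section TwoGenerators

variable {m e q : ℕ}

theorem exists_lt_and_mul_add_mul_eq (hm : 0 < m) (a b : ℕ) :
    ∃ a' b', b' < m ∧ a * m + b * e = a' * m + b' * e :=
  ⟨a + b / m * e, b % m, Nat.mod_lt b hm, by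
    conv_lhs => rw [← Nat.mod_add_div b m]
    ring⟩

theorem eq_and_eq_of_mul_add_mul_eq (hcop : Nat.Coprime m e) {a b a' b' : ℕ} (hb : b < m)
    (hb' : b' < m) (h : a * m + b * e = a' * m + b' * e) : a = a' ∧ b = b' := by
  have hmod : b * e ≡ b' * e [MOD m] := by
    simpa [Nat.ModEq, Nat.add_mod, Nat.mul_mod_left] using congrArg (· % m) h
  have hbb' : b = b' := (Nat.ModEq.cancel_right_of_coprime hcop hmod).eq_of_lt_of_lt hb hb'
  subst hbb'
  exact ⟨Nat.eq_of_mul_eq_mul_right (m := m) (by omega) (by omega), rfl⟩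

theorem coprime_of_add_one_eq_mul (he : e + 1 = q * m) : Nat.Coprime m e :=
  Nat.Coprime.symm <| (Nat.coprime_self_add_right.mpr (Nat.coprime_one_right e)).coprime_dvd_right
    ⟨q, by rw [he, mul_comm]⟩

theorem mul_add_mul_le_mul_iff (he : e + 1 = q * m) {a b : ℕ} (hb : b < m) (K : ℕ) :
    a * m + b * e ≤ K * m ↔ a + q * b ≤ K := by
  have hsum : a * m + b * e + b = (a + q * b) * m := by
    rw [add_assoc, ← mul_add_one, he]; ring
  constructor
  · intro h
    have : (a + q * b) * m < (K + 1) * m := by rw [add_one_mul]; omega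
    exact Nat.lt_succ_iff.mp (Nat.lt_of_mul_lt_mul_right this)
  · intro h
    have := Nat.mul_le_mul_right m h
    omega

open scoped Classical in
theorem card_filter_mul_add_mul_le (he : e + 1 = q * m) {K : ℕ} (hK : K / q < m) :
    ((range (K * m + 1)).filter (fun n => ∃ a b : ℕ, n = a * m + b * e)).card
      = ∑ b ∈ range (K / q + 1), (K - q * b + 1) := by
  have hq : 0 < q := Nat.pos_of_ne_zero (by rintro rfl; simp at he)
  have hm : 0 < m := (K / q).zero_le.trans_lt hK
  have hsum : ∑ b ∈ range (K / q + 1), (K - q * b + 1)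
      = ((range (K / q + 1)).sigma fun b => range (K - q * b + 1)).card := by
    rw [card_sigma]; simp only [card_range]
  rw [hsum]
  symm
  apply card_bij (fun p _ => p.2 * m + p.1 * e)
  · rintro ⟨b, a⟩ hp
    simp only [mem_sigma, mem_range] at hp
    have hqb : q * b ≤ K := mul_comm b q ▸ (Nat.le_div_iff_mul_le hq).mp (by omega)
    simp only [mem_filter, mem_range]
    exact ⟨Nat.lt_succ_of_le ((mul_add_mul_le_mul_iff he (by omega) K).mpr (by omega)), a, b, rfl⟩
  · rintro ⟨b, a⟩ hp ⟨b', a'⟩ hp' h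
    simp only [mem_sigma, mem_range] at hp hp' h
    obtain ⟨rfl, rfl⟩ :=
      eq_and_eq_of_mul_add_mul_eq (coprime_of_add_one_eq_mul he) (by omega) (by omega) h
    rfl
  · intro n hn
    simp only [mem_filter, mem_range] at hn
    obtain ⟨hnK, a, b, rfl⟩ := hn
    obtain ⟨a', b', hb', hab⟩ := exists_lt_and_mul_add_mul_eq (e := e) hm a b
    have hle := (mul_add_mul_le_mul_iff (a := a') he hb' K).mp (by omega)
    have hb'K : b' ≤ K / q := (Nat.le_div_iff_mul_le hq).mpr (by linarith)
    exact ⟨⟨b', a'⟩, by simp only [mem_sigma, mem_range]; omega, hab.symm⟩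

end TwoGenerators

theorem sum_range_four_mul_add (k c : ℕ) :
    ∑ i ∈ range (k + 1), (4 * i + c) = (k + 1) * (2 * k + c) := by
  induction k with
  | zero => simp
  | succ k ih => rw [sum_range_succ, ih]; ring

theorem sum_range_two_mul_sub_four_mul_add_one (j : ℕ) :
    ∑ b ∈ range (j / 2 + 1), (2 * j - 4 * b + 1) = (j + 1) * (j + 2) / 2 := by
  have hterm : ∀ b ∈ range (j / 2 + 1),
      2 * j - 4 * (j / 2 + 1 - 1 - b) + 1 = 4 * b + (2 * (j % 2) + 1) := by
    intro b hb
    rw [mem_range] at hb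
    omega
  rw [← sum_range_reflect, sum_congr rfl hterm, sum_range_four_mul_add]
  suffices 2 * ((j / 2 + 1) * (2 * (j / 2) + (2 * (j % 2) + 1))) = (j + 1) * (j + 2) by omega
  obtain ⟨k, r, hr, rfl⟩ : ∃ k r, r < 2 ∧ j = 2 * k + r := ⟨j / 2, j % 2, by omega, by omega⟩
  rw [show (2 * k + r) / 2 = k by omega, show (2 * k + r) % 2 = r by omega]
  interval_cases r <;> ring

open scoped Classical in
theorem semigroup_counting_case_b
    (d : ℕ) (hd : 1 < d) (hdeven : 2 ∣ d) (j : ℕ) (hj : j ≤ d - 2) :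
    ((Finset.range (j * d + 1)).filter
        (fun n => ∃ a b : ℕ, n = a * (d / 2) + b * (2 * d - 1))).card
      = (j + 1) * (j + 2) / 2 := by
  obtain ⟨m, rfl⟩ := hdeven
  have he : 2 * (2 * m) - 1 + 1 = 4 * m := by omega
  rw [Nat.mul_div_cancel_left m two_pos, show j * (2 * m) = 2 * j * m by ring,
    card_filter_mul_add_mul_le he (by omega), show 2 * j / 4 = j / 2 by omega]
  exact sum_range_two_mul_sub_four_mul_add_one j
end

section
/- For odd j ≥ 5, the Fibonacci numbers (with φ_0 = 0, φ_1 = 1) satisfy gcd(φ_{j-2}, φ_{j+2}) = 1 and (φ_{j-2} - 1)(φ_{j+2} - 1) = (φ_j - 1)(φ_j - 2), where the corresponding rational cuspidal curve has degree φ_j; i.e., the genus formula (d-1)(d-2)/2 = (p-1)(q-1)/2 holds with d = φ_j, p = φ_{j-2}, q = φ_{j+2}. -/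
/-!
Put `n = j - 2`, which is odd. Catalan's identity `φₙ φₙ₊₄ = φₙ₊₂² - (-1)ⁿ` gives
`φₙ φₙ₊₄ = φₙ₊₂² + 1`, and the recurrence gives `φₙ + φₙ₊₄ = 3 φₙ₊₂`; expanding both sides of
the genus identity, these two relations are exactly what is needed. Coprimality follows from
`gcd(φₘ, φₙ) = φ_{gcd(m, n)}` because `gcd(n, n + 4) = 1` for odd `n`.
-/

namespace Nat

theorem fib_add_fib_add_four (n : ℕ) : fib n + fib (n + 4) = 3 * fib (n + 2) := by
  simp only [fib_add_two, show n + 4 = n + 2 + 2 from rfl]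
  ring

theorem fib_mul_fib_add_four_of_odd {n : ℕ} (hn : Odd n) :
    fib n * fib (n + 4) = fib (n + 2) ^ 2 + 1 := by
  have catalan : Int.fib (n + 2) ^ 2 - Int.fib n * Int.fib (n + 4) = -1 := by
    simpa [hn.neg_one_pow] using Int.fib_add_sq_sub_fib_mul_fib_add_two_mul n 2
  zify
  push_cast [← Int.fib_natCast]
  linear_combination -catalan

theorem coprime_fib_fib_add_four_of_odd {n : ℕ} (hn : Odd n) :
    Coprime (fib n) (fib (n + 4)) := by
  have : Coprime n (n + 4) := by
    rw [Coprime, add_comm, gcd_add_self_right, show 4 = 2 ^ 2 from rfl]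
    exact (coprime_two_right.mpr hn).pow_right 2
  rw [Coprime, ← fib_gcd, this, fib_one]

theorem fib_sub_one_mul_fib_add_four_sub_one_of_odd {n : ℕ} (hn : Odd n) :
    (fib n - 1) * (fib (n + 4) - 1) = (fib (n + 2) - 1) * (fib (n + 2) - 2) := by
  have hp : 1 ≤ fib n := fib_pos.mpr hn.pos
  have hq : 1 ≤ fib (n + 4) := fib_pos.mpr (by omega)
  have hd : 2 ≤ fib (n + 2) := by
    calc 2 = fib 3 := rfl
      _ ≤ fib (n + 2) := fib_mono (by have := hn.pos; omega)
  have hprod := fib_mul_fib_add_four_of_odd hn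
  have hsum := fib_add_fib_add_four n
  zify [hp, hq, hd, (by omega : 1 ≤ fib (n + 2))] at hprod hsum ⊢
  linear_combination hprod - hsum

end Nat

theorem fibonacci_genus_identity (j : ℕ) (hodd : Odd j) (hj : 5 ≤ j) :
    Nat.Coprime (Nat.fib (j - 2)) (Nat.fib (j + 2)) ∧
      (Nat.fib (j - 2) - 1) * (Nat.fib (j + 2) - 1)
        = (Nat.fib j - 1) * (Nat.fib j - 2) := by
  obtain ⟨n, rfl⟩ : ∃ n, j = n + 2 := ⟨j - 2, by omega⟩
  have hn : Odd n := by simpa [parity_simps] using hodd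
  rw [Nat.add_sub_cancel, show n + 2 + 2 = n + 4 from rfl]
  exact ⟨Nat.coprime_fib_fib_add_four_of_odd hn,
    Nat.fib_sub_one_mul_fib_add_four_sub_one_of_odd hn⟩
end

section
/- For odd j ≥ 5, gcd(φ_{j-2}², φ_j²) = 1 and (φ_{j-2}² - 1)(φ_j² - 1) = (φ_{j-2}φ_j - 1)(φ_{j-2}φ_j - 2), so the singular point with Puiseux pair (φ_{j-2}², φ_j²) has δ-invariant equal to the genus count for a curve of degree d = φ_{j-2}·φ_j. -/
lemma fib_cassini (n : ℕ) :
    (Nat.fib n : ℤ) * Nat.fib (n + 2) = (Nat.fib (n + 1) : ℤ) ^ 2 + (-1) ^ (n + 1) := by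
  induction n with
  | zero => simp
  | succ n ih =>
    have h1 : Nat.fib (n + 3) = Nat.fib (n + 1) + Nat.fib (n + 2) := Nat.fib_add_two
    have h2 : Nat.fib (n + 2) = Nat.fib n + Nat.fib (n + 1) := Nat.fib_add_two
    show (Nat.fib (n+1) : ℤ) * Nat.fib (n + 3) = _
    rw [h1]
    push_cast [h2] at ih ⊢
    ring_nf at ih ⊢
    linarith [ih]

theorem fibonacci_squares_genus_identity (j : ℕ) (hodd : Odd j) (hj : 5 ≤ j) :
    Nat.Coprime ((Nat.fib (j - 2)) ^ 2) ((Nat.fib j) ^ 2) ∧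
      ((Nat.fib (j - 2)) ^ 2 - 1) * ((Nat.fib j) ^ 2 - 1)
        = (Nat.fib (j - 2) * Nat.fib j - 1) * (Nat.fib (j - 2) * Nat.fib j - 2) := by
  obtain ⟨n, rfl⟩ : ∃ n, j = n + 2 := ⟨j - 2, by omega⟩
  have hn3 : 3 ≤ n := by omega
  have hnodd : Odd n := by rcases hodd with ⟨k, hk⟩; exact ⟨k - 1, by omega⟩
  have hsub : n + 2 - 2 = n := by omega
  rw [hsub]
  set a := Nat.fib n with ha
  set b := Nat.fib (n + 2) with hb
  have ha2 : 2 ≤ a := by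
    have := Nat.fib_mono hn3
    exact le_trans (by decide : 2 ≤ Nat.fib 3) this
  constructor
  · have hg : Nat.gcd n (n + 2) = 1 := by
      rcases hnodd with ⟨k, hk⟩
      have : Nat.gcd n (n + 2) ∣ 2 := by
        have := Nat.dvd_sub (Nat.gcd_dvd_right n (n + 2)) (Nat.gcd_dvd_left n (n + 2))
        simpa using this
      rcases (Nat.dvd_prime Nat.prime_two).mp this with h | h
      · exact h
      · exfalso
        have h2 : 2 ∣ n := h ▸ Nat.gcd_dvd_left n (n + 2)
        obtain ⟨t, ht⟩ := h2; omega
    have hco : Nat.Coprime a b := by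
      unfold Nat.Coprime
      rw [ha, hb, ← Nat.fib_gcd, hg, Nat.fib_one]
    exact hco.pow 2 2
  · -- key identity: a^2 + b^2 + 1 = 3ab
    have hcass := fib_cassini n
    have hneg : ((-1 : ℤ)) ^ (n + 1) = 1 := by
      have hev : Even (n + 1) := by rcases hnodd with ⟨k, hk⟩; exact ⟨k + 1, by omega⟩
      exact hev.neg_one_pow
    rw [hneg] at hcass
    have hrec : b = a + Nat.fib (n + 1) := Nat.fib_add_two
    have hab : 2 ≤ a * b := by
      have : a ≤ b := Nat.fib_mono (by omega)
      nlinarith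
    have key : (a : ℤ) ^ 2 + b ^ 2 + 1 = 3 * a * b := by
      have hc : (b : ℤ) = a + Nat.fib (n + 1) := by exact_mod_cast hrec
      nlinarith [hcass, hc]
    zify [show 1 ≤ a ^ 2 by nlinarith, show 1 ≤ b ^ 2 by nlinarith,
      show 1 ≤ a * b by omega, hab]
    nlinarith [key]
end

section
/- Let S be the numerical semigroup generated by 2 and 7. Then for every integer k ≥ 0, min over i+j=k (i,j ≥ 0) of (#(S ∩ [0,i)) + #(S ∩ [0,j))) equals ⌊(k+1)/2⌋ if k ≤ 12 and k - 6 if k ≥ 12. -/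
/-!
The semigroup generated by `2` and an odd `m` consists of the even numbers and the numbers `≥ m`,
so its gaps are the `m / 2` odd numbers below `m`, and `S ∩ [0, i)` has `i - min (i / 2) (m / 2)`
elements. In the sum `f i + f (k - i)` of two such counts the two corrections `min (· / 2) g`
together are at most `min (k / 2) (2 * g)`, with equality for `i = min (2 * g) (2 * (k / 2))`.
-/

lemma exists_eq_two_mul_add_mul_iff {m : ℕ} (hm : Odd m) (n : ℕ) :
    (∃ a b : ℕ, n = 2 * a + m * b) ↔ Even n ∨ m ≤ n := by
  obtain ⟨g, rfl⟩ := hm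
  constructor
  · rintro ⟨a, b | b, rfl⟩
    · exact Or.inl ⟨a, by ring⟩
    · exact Or.inr (by nlinarith)
  · rintro (⟨a, rfl⟩ | hn)
    · exact ⟨a, 0, by ring⟩
    · rcases Nat.even_or_odd n with ⟨a, rfl⟩ | ⟨a, rfl⟩
      · exact ⟨a, 0, by ring⟩
      · exact ⟨a - g, 1, by omega⟩

open scoped Classical in
lemma card_filter_range_exists_eq_two_mul_add_mul {m : ℕ} (hm : Odd m) (i : ℕ) :
    ((Finset.range i).filter (fun n => ∃ a b : ℕ, n = 2 * a + m * b)).card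
      = i - min (i / 2) (m / 2) := by
  induction i with
  | zero => simp
  | succ n ih =>
    have hm2 : m % 2 = 1 := Nat.odd_iff.mp hm
    rw [Finset.range_add_one, Finset.filter_insert]
    split_ifs with h
    · rw [Finset.card_insert_of_notMem (by simp), ih]
      rcases (exists_eq_two_mul_add_mul_iff hm n).mp h with h | h
      · have := Nat.even_iff.mp h; omega
      · omega
    · rw [ih]
      rw [exists_eq_two_mul_add_mul_iff hm, not_or, Nat.not_even_iff] at h
      omega

lemma inf'_range_sub_min_half_add_sub_min_half (g k : ℕ) :
    (Finset.range (k + 1)).inf' (Finset.nonempty_range_iff.mpr (Nat.succ_ne_zero k))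
        (fun i => (i - min (i / 2) g) + ((k - i) - min ((k - i) / 2) g))
      = k - min (k / 2) (2 * g) := by
  apply le_antisymm
  · have hmem : min (2 * g) (2 * (k / 2)) ∈ Finset.range (k + 1) := by
      rw [Finset.mem_range]; omega
    refine (Finset.inf'_le _ hmem).trans_eq ?_
    omega
  · refine Finset.le_inf' _ _ fun i hi => ?_
    rw [Finset.mem_range] at hi
    omega

open scoped Classical in
theorem min_convolution_2_7_and_2_7 (k : ℕ) :
    (Finset.range (k + 1)).inf'
        (Finset.nonempty_range_iff.mpr (Nat.succ_ne_zero k))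
        (fun i =>
          ((Finset.range i).filter (fun n => ∃ a b : ℕ, n = 2 * a + 7 * b)).card +
          ((Finset.range (k - i)).filter (fun n => ∃ a b : ℕ, n = 2 * a + 7 * b)).card)
      = if k ≤ 12 then (k + 1) / 2 else k - 6 := by
  simp only [card_filter_range_exists_eq_two_mul_add_mul (by decide : Odd 7), Nat.reduceDiv]
  rw [inf'_range_sub_min_half_add_sub_min_half]
  split <;> omega
end

section
/- For a homogeneous degree-d curve: if d > 1 and the singular point has a single Puiseux pair (p,q) with gcd(p,q) = 1 and 1 < p < q, and the genus formula (d-1)(d-2) = (p-1)(q-1) holds with the constraint p ∈ (d/2, d-1), then for d sufficiently large there is no such pair: there exists d₀ such that for all d > d₀ there are no coprime p, q with d/2 < p < d-1 and (p-1)(q-1) = (d-1)(d-2). -/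
/-!
If `p < d - 1`, the genus formula `(p - 1)(q - 1) = (d - 1)(d - 2)` forces `q > d`. Together with
`d < 2p` this leaves only `0` and `p` as elements of `⟨p, q⟩` in `[0, d]`, whereas the distribution
condition for `j = 1` asks for three. So no degree `d` at all admits such a pair, and `d₀ = 0` works.
-/

theorem lt_of_pred_mul_pred_eq {p q d : ℕ} (hp : 0 < p) (hpd : p < d - 1)
    (hgenus : (p - 1) * (q - 1) = (d - 1) * (d - 2)) : d < q := by
  by_contra! hqd
  have hle : (p - 1) * (q - 1) ≤ (d - 3) * (d - 1) := Nat.mul_le_mul (by omega) (by omega)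
  have hlt : (d - 3) * (d - 1) < (d - 2) * (d - 1) :=
    Nat.mul_lt_mul_of_pos_right (by omega) (by omega)
  rw [hgenus, mul_comm] at hle
  omega

theorem mem_span_pair_iff_of_lt {p q m : ℕ} (hq : m < q) (hp : m < 2 * p) :
    (∃ a b : ℕ, m = a * p + b * q) ↔ m = 0 ∨ m = p := by
  constructor
  · rintro ⟨a, b, rfl⟩
    obtain rfl : b = 0 := by
      by_contra hb
      have : q ≤ b * q := Nat.le_mul_of_pos_left q (by omega)
      omega
    have ha : a < 2 := by
      by_contra! ha
      have : 2 * p ≤ a * p := Nat.mul_le_mul_right p ha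
      omega
    interval_cases a <;> simp
  · rintro (rfl | rfl)
    exacts [⟨0, 0, by simp⟩, ⟨1, 0, by simp⟩]

open scoped Classical in
theorem card_filter_range_span_pair {p q n : ℕ} (hp : 0 < p) (hpn : p ≤ n) (hq : n < q)
    (hn : n < 2 * p) :
    ((Finset.range (n + 1)).filter (fun m => ∃ a b : ℕ, m = a * p + b * q)).card = 2 := by
  have hset : (Finset.range (n + 1)).filter (fun m => ∃ a b : ℕ, m = a * p + b * q) = {0, p} := by
    ext m
    simp only [Finset.mem_filter, Finset.mem_range, Finset.mem_insert, Finset.mem_singleton]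
    constructor
    · rintro ⟨hm, hspan⟩
      exact (mem_span_pair_iff_of_lt (by omega) (by omega)).1 hspan
    · intro hm
      exact ⟨by omega, (mem_span_pair_iff_of_lt (by omega) (by omega)).2 hm⟩
  rw [hset, Finset.card_pair hp.ne]

open scoped Classical in
theorem no_large_degree_with_multiplicity_in_half_range :
    ∃ d₀ : ℕ, ∀ d : ℕ, d₀ < d →
      ¬ ∃ p q : ℕ, Nat.Coprime p q ∧ 1 < p ∧ p < q ∧
          d < 2 * p ∧ p < d - 1 ∧
          (p - 1) * (q - 1) = (d - 1) * (d - 2) ∧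
          (∀ j : ℕ, j ≤ d - 2 →
            ((Finset.range (j * d + 1)).filter
                (fun n => ∃ a b : ℕ, n = a * p + b * q)).card
              = (j + 1) * (j + 2) / 2) := by
  refine ⟨0, fun d _ => ?_⟩
  rintro ⟨p, q, -, hp, -, hdp, hpd, hgenus, hcount⟩
  have hdq : d < q := lt_of_pred_mul_pred_eq (by omega) hpd hgenus
  have hcount_one := hcount 1 (by omega)
  rw [one_mul, card_filter_range_span_pair (by omega) (by omega) hdq hdp] at hcount_one
  norm_num at hcount_one
end

section
/- Let S be the numerical semigroup generated by coprime p, q with 1 < p < q, and suppose S satisfies #(S ∩ [0, jd+1)) = (j+1)(j+2)/2 for all 0 ≤ j ≤ d-2, where (p-1)(q-1) = (d-1)(d-2). Then taking j = 1, the number of elements of S in [0, d+1) equals 3; in particular p ≥ d/3 (the multiplicity bound of Matsuoka–Sakai). -/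
/-! If `3p < d`, then `0, p, 2p, 3p` are four elements of `S` in `[0, d]`, whereas the counting
hypothesis at `j = 1` says there are exactly three. -/

open Finset

theorem succ_le_card_filter_range_of_mul_le {P : ℕ → Prop} [DecidablePred P] {p k N : ℕ}
    (hp : 0 < p) (hmul : ∀ i, P (i * p)) (hk : k * p ≤ N) :
    k + 1 ≤ ((range (N + 1)).filter P).card := by
  have hsub : (range (k + 1)).image (· * p) ⊆ (range (N + 1)).filter P := by
    intro n hn
    obtain ⟨i, hi, rfl⟩ := mem_image.mp hn
    have : i * p ≤ k * p := Nat.mul_le_mul_right p (Nat.lt_succ_iff.mp (mem_range.mp hi))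
    exact mem_filter.mpr ⟨mem_range.mpr (by omega), hmul i⟩
  calc k + 1 = ((range (k + 1)).image (· * p)).card := by
        rw [card_image_of_injective _ (mul_left_injective₀ hp.ne'), card_range]
    _ ≤ _ := card_le_card hsub

open scoped Classical in
theorem multiplicity_bound_matsuoka_sakai_general
    (p q d : ℕ) (hp : 1 < p) (hd : 3 ≤ d)
    (hcount : ∀ j : ℕ, j ≤ d - 2 →
      ((Finset.range (j * d + 1)).filter
          (fun n => ∃ a b : ℕ, n = a * p + b * q)).card = (j + 1) * (j + 2) / 2) :
    ((Finset.range (d + 1)).filter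
        (fun n => ∃ a b : ℕ, n = a * p + b * q)).card = 3 ∧ d ≤ 3 * p := by
  have hthree := hcount 1 (by omega)
  rw [one_mul] at hthree
  refine ⟨hthree, ?_⟩
  by_contra! hlt
  have hfour := succ_le_card_filter_range_of_mul_le (P := fun n => ∃ a b : ℕ, n = a * p + b * q)
    (by omega) (fun i => ⟨i, 0, by ring⟩) hlt.le
  omega

open scoped Classical in
theorem multiplicity_bound_matsuoka_sakai
    (p q d : ℕ) (hcop : Nat.Coprime p q) (hp : 1 < p) (hpq : p < q) (hd : 3 ≤ d)
    (hgenus : (p - 1) * (q - 1) = (d - 1) * (d - 2))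
    (hcount : ∀ j : ℕ, j ≤ d - 2 →
      ((Finset.range (j * d + 1)).filter
          (fun n => ∃ a b : ℕ, n = a * p + b * q)).card = (j + 1) * (j + 2) / 2) :
    ((Finset.range (d + 1)).filter
        (fun n => ∃ a b : ℕ, n = a * p + b * q)).card = 3 ∧ d ≤ 3 * p :=
  multiplicity_bound_matsuoka_sakai_general p q d hp hd hcount
end
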